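/- For each n ≥ 1 let π_n be a stationary distribution of the reflected random walk on the path with n+2 vertices (π_n ≥ 0, Σ_{i=0}^{n+1} π_n(i) = 1, π_n P = π_n). Then lim_{n→∞} π_n(0) = c_0/2, and for every fixed i ≥ 1, lim_{n→∞} π_n(i) = c_i, where c_0 = 1 − p/q if p < q and c_0 = 0 otherwise, and c_i = (1/(2q))(1 − p/q)(p/q)^{i−1} if p < q and c_i = 0 otherwise. -/

import Mathlib

open Filter Finset

/-- The transition probabilities of the reflected random walk on the path with vertex set
`{0, 1, …, n+1}`, as a function of natural-number indices: `P(0,1) = 1`, `P(n+1,n) = 1`,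
`P(i,i+1) = p` and `P(i,i-1) = q` for `1 ≤ i ≤ n`, and `P(i,j) = 0` otherwise. -/
noncomputable def rwEntry (p q : ℝ) (n i j : ℕ) : ℝ :=
  if i = 0 then (if j = 1 then 1 else 0)
  else if i = n + 1 then (if j = n then 1 else 0)
  else if i ≤ n then (if j = i + 1 then p else if j + 1 = i then q else 0)
  else 0

/-- The point masses `c_i` of the weak limit theorem: `c_0 = 1 - p/q` if `p < q`
(else `0`), and `c_i = (1/(2q))(1 - p/q)(p/q)^{i-1}` for `i ≥ 1` if `p < q` (else `0`). -/
noncomputable def cmass (p q : ℝ) (i : ℕ) : ℝ :=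
  if p < q then
    (if i = 0 then 1 - p / q else (1 / (2 * q)) * (1 - p / q) * (p / q) ^ (i - 1))
  else 0

/-!
A stationary vector of a nearest-neighbour chain on a path satisfies detailed balance
`π(i+1) P(i+1,i) = π(i) P(i,i+1)`: this follows from the balance equations by induction along
the path. For the reflected walk it makes `π` geometric with ratio `p/q` away from the ends,
`π(0) = q π(1)`, `π(i) = (p/q)^(i-1) π(1)` for `1 ≤ i ≤ n` and `π(n+1) = p π(n)`, so normalising
gives `π(1) = 1 / (q + ∑_{k<n} (p/q)^k + p (p/q)^(n-1))`. When `p < q` the geometric series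
converges and `π(1) → (1 - p/q) / (2q)`; otherwise the denominator grows at least linearly and
`π(1) → 0`.
-/

open Topology

section Tridiagonal

variable {P : ℕ → ℕ → ℝ}

lemma sum_mul_eq_of_tridiagonal (hP : ∀ i j, i ≠ j + 1 → j ≠ i + 1 → P i j = 0)
    (a : ℕ → ℝ) {m j : ℕ} (hj : j + 1 < m) :
    ∑ i ∈ range m, a i * P i j = a (j - 1) * P (j - 1) j + a (j + 1) * P (j + 1) j := by
  refine sum_eq_add_of_mem _ _ (by simp; omega) (by simpa using hj) (by omega) fun i _ hi => ?_
  rw [hP i j hi.2 (by omega), mul_zero]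

lemma detailed_balance_of_tridiagonal (hP : ∀ i j, i ≠ j + 1 → j ≠ i + 1 → P i j = 0)
    (h01 : P 0 1 = 1) {n : ℕ} (hrow : ∀ i, i + 1 ≤ n → P (i + 1) i + P (i + 1) (i + 2) = 1)
    {a : ℕ → ℝ} (hstat : ∀ j, j ≤ n → ∑ i ∈ range (n + 2), a i * P i j = a j) :
    ∀ i, i ≤ n → a (i + 1) * P (i + 1) i = a i * P i (i + 1) := by
  intro i hi
  induction i with
  | zero =>
    have h := hstat 0 (Nat.zero_le n)
    rw [sum_mul_eq_of_tridiagonal hP a (by omega), hP 0 0 (by omega) (by omega)] at h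
    rw [h01]
    linarith
  | succ i ih =>
    have h := hstat (i + 1) hi
    rw [sum_mul_eq_of_tridiagonal hP a (by omega), Nat.add_sub_cancel] at h
    linear_combination h - a (i + 1) * hrow i hi + ih (by omega)

end Tridiagonal

section ReflectedWalk

variable {p q : ℝ} {n : ℕ}

lemma rwEntry_eq_zero_of_not_adj (p q : ℝ) (n : ℕ) :
    ∀ i j, i ≠ j + 1 → j ≠ i + 1 → rwEntry p q n i j = 0 := by
  grind [rwEntry]

lemma rwEntry_zero_one : rwEntry p q n 0 1 = 1 := by
  simp [rwEntry]

lemma rwEntry_succ_self {i : ℕ} (hi : i + 1 ≤ n) : rwEntry p q n (i + 1) i = q := by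
  grind [rwEntry]

lemma rwEntry_self_succ {i : ℕ} (hi1 : 1 ≤ i) (hin : i ≤ n) : rwEntry p q n i (i + 1) = p := by
  grind [rwEntry]

lemma rwEntry_last : rwEntry p q n (n + 1) n = 1 := by
  simp [rwEntry]

noncomputable def rwNormalizer (p q : ℝ) (n : ℕ) : ℝ :=
  q + ∑ k ∈ range n, (p / q) ^ k + p * (p / q) ^ (n - 1)

def IsRWStationary (p q : ℝ) (n : ℕ) (a : ℕ → ℝ) : Prop :=
  ∀ j, j ≤ n + 1 → ∑ i ∈ range (n + 2), a i * rwEntry p q n i j = a j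

namespace IsRWStationary

variable {a : ℕ → ℝ}

lemma detailed_balance (hstat : IsRWStationary p q n a) (hpq : p + q = 1) :
    ∀ i, i ≤ n → a (i + 1) * rwEntry p q n (i + 1) i = a i * rwEntry p q n i (i + 1) :=
  detailed_balance_of_tridiagonal (rwEntry_eq_zero_of_not_adj p q n) rwEntry_zero_one
    (fun i hi => by rw [rwEntry_succ_self hi, rwEntry_self_succ (by omega) hi, add_comm, hpq])
    (fun j hj => hstat j (by omega))

lemma apply_zero (hstat : IsRWStationary p q n a) (hpq : p + q = 1) (hn : 1 ≤ n) :
    a 0 = q * a 1 := by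
  have h := hstat.detailed_balance hpq 0 (Nat.zero_le n)
  rw [rwEntry_succ_self hn, rwEntry_zero_one] at h
  linarith

lemma apply_eq_pow_mul (hstat : IsRWStationary p q n a) (hq : q ≠ 0) (hpq : p + q = 1)
    {i : ℕ} (hi : 1 ≤ i) (hin : i ≤ n) : a i = (p / q) ^ (i - 1) * a 1 := by
  induction i, hi using Nat.le_induction with
  | base => simp
  | succ i hi ih =>
    have h := hstat.detailed_balance hpq i (by omega)
    rw [rwEntry_succ_self hin, rwEntry_self_succ hi (by omega)] at h
    have hpow : (p / q) ^ i = (p / q) ^ (i - 1) * (p / q) := by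
      rw [← pow_succ, Nat.sub_add_cancel hi]
    rw [Nat.add_sub_cancel, hpow, mul_right_comm, ← ih (by omega), mul_div_assoc', eq_div_iff hq]
    exact h

lemma apply_last (hstat : IsRWStationary p q n a) (hpq : p + q = 1) (hn : 1 ≤ n) :
    a (n + 1) = p * a n := by
  have h := hstat.detailed_balance hpq n le_rfl
  rw [rwEntry_last, rwEntry_self_succ hn le_rfl] at h
  linarith

lemma apply_one (hstat : IsRWStationary p q n a) (hq : q ≠ 0) (hpq : p + q = 1) (hn : 1 ≤ n)
    (hsum : ∑ i ∈ range (n + 2), a i = 1) :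
    a 1 = (rwNormalizer p q n)⁻¹ := by
  have hbulk : ∑ k ∈ range n, a (k + 1) = (∑ k ∈ range n, (p / q) ^ k) * a 1 := by
    rw [sum_mul]
    refine sum_congr rfl fun k hk => ?_
    rw [hstat.apply_eq_pow_mul hq hpq (Nat.le_add_left 1 k) (by simp at hk; omega),
      Nat.add_sub_cancel]
  refine eq_inv_of_mul_eq_one_right ?_
  calc rwNormalizer p q n * a 1
      = q * a 1 + (∑ k ∈ range n, (p / q) ^ k) * a 1 + p * ((p / q) ^ (n - 1) * a 1) := by
        unfold rwNormalizer; ring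
    _ = a 0 + ∑ k ∈ range n, a (k + 1) + a (n + 1) := by
        rw [hstat.apply_zero hpq hn, hbulk, hstat.apply_last hpq hn,
          hstat.apply_eq_pow_mul hq hpq hn le_rfl]
    _ = 1 := by
        rw [← hsum, sum_range_succ, sum_range_succ' a n]
        ring

end IsRWStationary

lemma tendsto_rwNormalizer_of_lt (hq : 0 < q) (hpq : p + q = 1) (hlt : p < q) :
    Tendsto (rwNormalizer p q) atTop (𝓝 (q + (1 - p / q)⁻¹)) := by
  have hr : |p / q| < 1 := by
    rw [abs_div, abs_of_pos hq, div_lt_one hq, abs_lt]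
    constructor <;> linarith
  have hseries := (hasSum_geometric_of_abs_lt_one hr).tendsto_sum_nat
  have htail : Tendsto (fun n : ℕ => p * (p / q) ^ (n - 1)) atTop (𝓝 (p * 0)) :=
    ((tendsto_pow_atTop_nhds_zero_of_abs_lt_one hr).comp (tendsto_sub_atTop_nat 1)).const_mul p
  unfold rwNormalizer
  simpa only [mul_zero, add_zero] using (tendsto_const_nhds.add hseries).add htail

lemma tendsto_rwNormalizer_atTop (hq : 0 < q) (hle : q ≤ p) :
    Tendsto (rwNormalizer p q) atTop atTop := by
  have hr : 1 ≤ p / q := (one_le_div hq).2 hle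
  refine tendsto_atTop_mono (fun n => ?_) tendsto_natCast_atTop_atTop
  have hseries : (n : ℝ) ≤ ∑ k ∈ range n, (p / q) ^ k := by
    simpa using card_nsmul_le_sum (range n) _ 1 fun k _ => one_le_pow₀ hr
  have htail : 0 ≤ p * (p / q) ^ (n - 1) := by have := hq.trans_le hle; positivity
  unfold rwNormalizer
  linarith

lemma tendsto_inv_rwNormalizer (hq : 0 < q) (hpq : p + q = 1) :
    Tendsto (fun n => (rwNormalizer p q n)⁻¹) atTop (𝓝 (cmass p q 1)) := by
  by_cases hlt : p < q
  · have hr : 0 < 1 - p / q := by rw [sub_pos, div_lt_one hq]; exact hlt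
    convert (tendsto_rwNormalizer_of_lt hq hpq hlt).inv₀ (by positivity) using 2
    have hqp : q - p ≠ 0 := sub_ne_zero.2 hlt.ne'
    have h2q : q - p + 1 = 2 * q := by linarith
    rw [cmass, if_pos hlt, if_neg one_ne_zero, Nat.sub_self, pow_zero]
    field_simp
    rw [h2q, div_self (by positivity)]
  · rw [cmass, if_neg hlt]
    exact (tendsto_rwNormalizer_atTop hq (not_lt.1 hlt)).inv_tendsto_atTop

lemma cmass_eq_pow_mul {i : ℕ} (hi : 1 ≤ i) :
    cmass p q i = (p / q) ^ (i - 1) * cmass p q 1 := by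
  simp only [cmass, if_neg (Nat.one_le_iff_ne_zero.1 hi), one_ne_zero, if_false, Nat.sub_self,
    pow_zero, mul_one]
  split_ifs <;> ring

lemma cmass_zero_div_two (hq : q ≠ 0) : cmass p q 0 / 2 = q * cmass p q 1 := by
  simp only [cmass, if_true, one_ne_zero, if_false, Nat.sub_self, pow_zero, mul_one]
  split_ifs
  · field_simp
  · simp

end ReflectedWalk

theorem stationary_distribution_limits_general
    (p q : ℝ) (hq0 : 0 < q) (hpq : p + q = 1)
    (Pi : ℕ → ℕ → ℝ)
    (hsum : ∀ n, 1 ≤ n → ∑ i ∈ Finset.range (n + 2), Pi n i = 1)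
    (hstat : ∀ n, 1 ≤ n → ∀ j, j ≤ n + 1 →
      ∑ i ∈ Finset.range (n + 2), Pi n i * rwEntry p q n i j = Pi n j) :
    Tendsto (fun n : ℕ => Pi n 0) atTop (nhds (cmass p q 0 / 2)) ∧
    ∀ i, 1 ≤ i → Tendsto (fun n : ℕ => Pi n i) atTop (nhds (cmass p q i)) := by
  have hq : q ≠ 0 := hq0.ne'
  have hπ : ∀ n, 1 ≤ n → IsRWStationary p q n (Pi n) := hstat
  have hone : ∀ᶠ n in atTop, Pi n 1 = (rwNormalizer p q n)⁻¹ :=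
    eventually_atTop.2 ⟨1, fun n hn => (hπ n hn).apply_one hq hpq hn (hsum n hn)⟩
  have hlim := tendsto_inv_rwNormalizer hq0 hpq
  constructor
  · rw [cmass_zero_div_two hq]
    refine (hlim.const_mul q).congr' ?_
    filter_upwards [hone, eventually_ge_atTop 1] with n h1 hn
    rw [(hπ n hn).apply_zero hpq hn, h1]
  · intro i hi
    rw [cmass_eq_pow_mul hi]
    refine (hlim.const_mul _).congr' ?_
    filter_upwards [hone, eventually_ge_atTop i] with n h1 hin
    have hn := hi.trans hin
    rw [(hπ n hn).apply_eq_pow_mul hq hpq hi hin, h1]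

/-- **Lemma (limits of the stationary distributions).** If for each `n ≥ 1`, `π_n` is a
stationary distribution of the reflected random walk on the path with `n+2` vertices,
then `π_n(0) → c_0/2` and `π_n(i) → c_i` for every fixed `i ≥ 1`, as `n → ∞`. -/
theorem stationary_distribution_limits
    (p q : ℝ) (hp0 : 0 < p) (hp1 : p < 1) (hq0 : 0 < q) (hq1 : q < 1) (hpq : p + q = 1)
    (Pi : ℕ → ℕ → ℝ)
    (hnonneg : ∀ n, 1 ≤ n → ∀ i, i ≤ n + 1 → 0 ≤ Pi n i)
    (hsum : ∀ n, 1 ≤ n → ∑ i ∈ Finset.range (n + 2), Pi n i = 1)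
    (hstat : ∀ n, 1 ≤ n → ∀ j, j ≤ n + 1 →
      ∑ i ∈ Finset.range (n + 2), Pi n i * rwEntry p q n i j = Pi n j) :
    Tendsto (fun n : ℕ => Pi n 0) atTop (nhds (cmass p q 0 / 2)) ∧
    ∀ i, 1 ≤ i → Tendsto (fun n : ℕ => Pi n i) atTop (nhds (cmass p q i)) :=
  stationary_distribution_limits_general p q hq0 hpq Pi hsum hstat
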